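/- The spammer error probability ε̄_S(k) of k-ary incidence coding (as defined by the formulas of Lemma 1) is nondecreasing in k and converges to 1/2 as k → ∞. -/

import Mathlib

open Filter

/-- Spammer error probability of k-ary incidence coding (Lemma 1). -/
noncomputable def epsS (k : ℕ) : ℝ :=
  if Odd k then
    (∑ i ∈ Finset.range ((k-1)/2+1), (i : ℝ) * (k.choose i : ℝ)) /
      ((k : ℝ) * 2^(k-1))
  else
    ((∑ i ∈ Finset.range ((k-1)/2+1), (i : ℝ) * (k.choose i : ℝ)) +
        ((k : ℝ)/4) * (k.choose (k/2) : ℝ)) / ((k : ℝ) * 2^(k-1))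

/- ### Auxiliary lemmas -/

lemma sum_mul_choose (k m : ℕ) :
    ∑ i ∈ Finset.range (m+1), i * (k+1).choose i
      = (k+1) * ∑ j ∈ Finset.range m, k.choose j := by
  rw [Finset.sum_range_succ' (fun i => i * (k+1).choose i) m, Finset.mul_sum]
  simp only [Nat.zero_mul, add_zero]
  refine Finset.sum_congr rfl fun j _ => ?_
  have h := Nat.add_one_mul_choose_eq k j
  rw [mul_comm, h]

lemma half_sum (m : ℕ) :
    2 * (∑ j ∈ Finset.range m, (2*m).choose j) + (2*m).choose m = 4 ^ m := by
  have h1 := Nat.sum_range_choose_halfway m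
  have h2 : ∑ i ∈ Finset.range (m+1), (2*m+1).choose i
      = ∑ i ∈ Finset.range m, ((2*m).choose i + (2*m).choose (i+1)) + 1 := by
    rw [Finset.sum_range_succ' (fun i => (2*m+1).choose i) m]
    have e1 : ∀ i, (2*m+1).choose (i+1) = (2*m).choose i + (2*m).choose (i+1) :=
      fun i => Nat.choose_succ_succ _ _
    simp only [e1, Nat.choose_zero_right]
  have h3 : ∑ i ∈ Finset.range m, ((2*m).choose i + (2*m).choose (i+1))
      = (∑ i ∈ Finset.range m, (2*m).choose i)
        + ∑ i ∈ Finset.range m, (2*m).choose (i+1) :=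
    Finset.sum_add_distrib
  have h4 := Finset.sum_range_succ' (fun i => (2*m).choose i) m
  have h5 := Finset.sum_range_succ (fun i => (2*m).choose i) m
  simp only [Nat.choose_zero_right] at h4
  omega

lemma choose_succ_eq (n : ℕ) :
    (2*(n+1)).choose (n+1) = 2 * ((2*n+1).choose n) := by
  have h1 : 2*(n+1) = (2*n+1)+1 := by ring
  rw [h1, Nat.choose_succ_succ, Nat.choose_symm_half]
  omega

lemma epsS_odd (m : ℕ) :
    epsS (2*m+1) = 1/2 - ((2*m).choose m : ℝ) / 2^(2*m+1) := by
  have hodd : Odd (2*m+1) := ⟨m, by ring⟩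
  rw [epsS, if_pos hodd, show (2*m+1-1)/2+1 = m+1 from by omega,
     show 2*m+1-1 = 2*m from by omega]
  have h := sum_mul_choose (2*m) m
  have h' : (∑ i ∈ Finset.range (m+1), (i:ℝ) * ((2*m+1).choose i : ℝ))
      = ((2*m+1 : ℕ) : ℝ) * ∑ j ∈ Finset.range m, ((2*m).choose j : ℝ) := by
    exact_mod_cast congrArg (fun n : ℕ => (n:ℝ)) h
  have hhalf : 2 * (∑ j ∈ Finset.range m, ((2*m).choose j : ℝ))
      + ((2*m).choose m : ℝ) = 4^m := by
    exact_mod_cast congrArg (fun n : ℕ => (n:ℝ)) (half_sum m)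
  have hS : (∑ j ∈ Finset.range m, ((2*m).choose j : ℝ))
      = (4^m - ((2*m).choose m : ℝ))/2 := by linarith
  rw [h', hS]
  have hk : ((2*m+1 : ℕ) : ℝ) = 2*(m:ℝ)+1 := by push_cast; ring
  have h2m : (2:ℝ)^(2*m) = 4^m := by rw [pow_mul]; norm_num
  have h2m1 : (2:ℝ)^(2*m+1) = 2 * 4^m := by rw [pow_succ, h2m]; ring
  rw [hk, h2m, h2m1]
  have h4 : (0:ℝ) < 4^m := by positivity
  have hm : (0:ℝ) < 2*(m:ℝ)+1 := by positivity
  field_simp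

lemma epsS_even (n : ℕ) :
    epsS (2*n+2) = 1/2 - ((2*n+1).choose n : ℝ) / 2^(2*n+2) := by
  have heven : ¬ Odd (2*n+2) := by
    intro hodd; rw [Nat.odd_iff] at hodd; omega
  rw [epsS, if_neg heven, show (2*n+2-1)/2+1 = n+1 from by omega,
     show 2*n+2-1 = 2*n+1 from by omega, show (2*n+2)/2 = n+1 from by omega]
  have h : ∑ i ∈ Finset.range (n+1), i * (2*n+2).choose i
      = (2*n+2) * ∑ j ∈ Finset.range n, (2*n+1).choose j := by
    have h0 := sum_mul_choose (2*n+1) n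
    rw [show (2*n+1)+1 = 2*n+2 from by omega] at h0
    exact h0
  have h' : (∑ i ∈ Finset.range (n+1), (i:ℝ) * ((2*n+2).choose i : ℝ))
      = ((2*n+2 : ℕ) : ℝ) * ∑ j ∈ Finset.range n, ((2*n+1).choose j : ℝ) := by
    exact_mod_cast congrArg (fun x : ℕ => (x:ℝ)) h
  have hhalf : (∑ j ∈ Finset.range n, ((2*n+1).choose j : ℝ))
      + ((2*n+1).choose n : ℝ) = 4^n := by
    have h1 := Nat.sum_range_choose_halfway n
    have h2 := Finset.sum_range_succ (fun i => (2*n+1).choose i) n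
    have h3 : (∑ j ∈ Finset.range n, (2*n+1).choose j) + (2*n+1).choose n = 4^n := by
      omega
    exact_mod_cast congrArg (fun x : ℕ => (x:ℝ)) h3
  have hch : ((2*n+2).choose (n+1) : ℝ) = 2 * ((2*n+1).choose n : ℝ) := by
    have h6 := choose_succ_eq n
    rw [show 2*(n+1) = 2*n+2 from by ring] at h6
    exact_mod_cast congrArg (fun x : ℕ => (x:ℝ)) h6
  have hS : (∑ j ∈ Finset.range n, ((2*n+1).choose j : ℝ))
      = 4^n - ((2*n+1).choose n : ℝ) := by linarith
  rw [h', hS, hch]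
  have hk : ((2*n+2 : ℕ) : ℝ) = 2*(n:ℝ)+2 := by push_cast; ring
  have h2m : (2:ℝ)^(2*n) = 4^n := by rw [pow_mul]; norm_num
  have h2m1 : (2:ℝ)^(2*n+1) = 2 * 4^n := by rw [pow_succ, h2m]; ring
  have h2m2 : (2:ℝ)^(2*n+2) = 4 * 4^n := by
    rw [show 2*n+2 = (2*n+1)+1 from rfl, pow_succ, h2m1]; ring
  rw [hk, h2m1, h2m2]
  have h4 : (0:ℝ) < 4^n := by positivity
  have hm : (0:ℝ) < 2*(n:ℝ)+2 := by positivity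
  field_simp
  ring

lemma epsS_eq (k : ℕ) (hk : 1 ≤ k) :
    epsS k = 1/2 - (Nat.centralBinom (k/2) : ℝ)/4^(k/2)/2 := by
  rcases Nat.even_or_odd k with he | ho
  · obtain ⟨m, rfl⟩ := he
    obtain ⟨n, rfl⟩ : ∃ n, m = n + 1 := ⟨m - 1, by omega⟩
    rw [show (n+1)+(n+1) = 2*n+2 from by ring, epsS_even n,
       show (2*n+2)/2 = n+1 from by omega]
    have hcb : (Nat.centralBinom (n+1) : ℝ) = 2 * ((2*n+1).choose n : ℝ) := by
      rw [Nat.centralBinom_eq_two_mul_choose]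
      exact_mod_cast congrArg (fun x : ℕ => (x:ℝ)) (choose_succ_eq n)
    rw [hcb]
    have h2 : (2:ℝ)^(2*n+2) = 4^(n+1) := by
      rw [show 2*n+2 = 2*(n+1) from by ring, pow_mul]; norm_num
    rw [h2]
    ring
  · obtain ⟨m, rfl⟩ := ho
    rw [epsS_odd m, show (2*m+1)/2 = m from by omega,
       Nat.centralBinom_eq_two_mul_choose]
    have h2 : (2:ℝ)^(2*m+1) = 4^m * 2 := by
      rw [pow_succ, pow_mul]; norm_num
    rw [h2, div_div]

lemma cb_sq_le (n : ℕ) : ((Nat.centralBinom n : ℝ))^2 * ((n:ℝ)+1) ≤ 16^n := by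
  induction n with
  | zero => simp [Nat.centralBinom]
  | succ n ih =>
    have key : ((n:ℝ)+1) * (Nat.centralBinom (n+1) : ℝ)
        = 2*(2*(n:ℝ)+1) * (Nat.centralBinom n : ℝ) := by
      have := Nat.succ_mul_centralBinom_succ n
      exact_mod_cast congrArg (fun x : ℕ => (x:ℝ)) this
    have h16 : (0:ℝ) < 16^n := by positivity
    have hcb : (0:ℝ) ≤ (Nat.centralBinom n : ℝ) := Nat.cast_nonneg _
    have h1 : ((n:ℝ)+1)^2 * ((Nat.centralBinom (n+1):ℝ))^2
        = 4*(2*(n:ℝ)+1)^2 * ((Nat.centralBinom n : ℝ))^2 := by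
      linear_combination (((n:ℝ)+1) * (Nat.centralBinom (n+1) : ℝ)
        + 2*(2*(n:ℝ)+1) * (Nat.centralBinom n : ℝ)) * key
    have hpoly : 4*(2*(n:ℝ)+1)^2*((n:ℝ)+2) ≤ 16*((n:ℝ)+1)^3 := by
      nlinarith [(by positivity : (0:ℝ) ≤ (n:ℝ))]
    have hpos3 : (0:ℝ) < ((n:ℝ)+1)^3 := by positivity
    have h2 : ((Nat.centralBinom (n+1):ℝ))^2 * (((n:ℝ)+1)+1) * ((n:ℝ)+1)^3
        ≤ 16^(n+1) * ((n:ℝ)+1)^3 := by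
      calc ((Nat.centralBinom (n+1):ℝ))^2 * (((n:ℝ)+1)+1) * ((n:ℝ)+1)^3
          = (((n:ℝ)+1)^2 * ((Nat.centralBinom (n+1):ℝ))^2)
              * (((n:ℝ)+2)*((n:ℝ)+1)) := by ring
        _ = 4*(2*(n:ℝ)+1)^2*((n:ℝ)+2)
              * (((Nat.centralBinom n:ℝ))^2 * ((n:ℝ)+1)) := by rw [h1]; ring
        _ ≤ 4*(2*(n:ℝ)+1)^2*((n:ℝ)+2) * 16^n :=
            mul_le_mul_of_nonneg_left ih (by positivity)
        _ ≤ 16*((n:ℝ)+1)^3 * 16^n :=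
            mul_le_mul_of_nonneg_right hpoly (le_of_lt h16)
        _ = 16^(n+1) * ((n:ℝ)+1)^3 := by rw [pow_succ]; ring
    have h3 : ((Nat.centralBinom (n+1):ℝ))^2 * (((n:ℝ)+1)+1) ≤ 16^(n+1) :=
      le_of_mul_le_mul_right h2 hpos3
    push_cast
    linarith [h3]

lemma cb_tendsto :
    Tendsto (fun n : ℕ => (Nat.centralBinom n : ℝ)/4^n) atTop (nhds 0) := by
  apply squeeze_zero (g := fun n : ℕ => Real.sqrt (1/((n:ℝ)+1)))
    (fun n => by positivity)
  · intro n
    rw [Real.le_sqrt (by positivity) (by positivity), div_pow,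
       div_le_div_iff₀ (by positivity) (by positivity)]
    have h := cb_sq_le n
    have h4 : ((4:ℝ)^n)^2 = 16^n := by
      rw [← pow_mul, mul_comm, pow_mul]; norm_num
    calc (Nat.centralBinom n : ℝ)^2 * ((n:ℝ)+1)
        ≤ 16^n := h
      _ = 1 * ((4:ℝ)^n)^2 := by rw [h4, one_mul]
  · have h1 : Tendsto (fun n : ℕ => (1:ℝ)/((n:ℝ)+1)) atTop (nhds 0) :=
      tendsto_one_div_add_atTop_nhds_zero_nat
    have h2 := (Real.continuous_sqrt.tendsto 0).comp h1
    rw [Real.sqrt_zero] at h2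
    exact h2

/-- ε̄_S(k) is nondecreasing in k and converges to 1/2 as k → ∞. -/
theorem stmt19 :
    (∀ k : ℕ, 2 ≤ k → epsS k ≤ epsS (k+1)) ∧
    Tendsto epsS atTop (nhds (1/2)) := by
  constructor
  · intro k hk
    rcases Nat.even_or_odd k with he | ho
    · obtain ⟨m, rfl⟩ := he
      obtain ⟨n, rfl⟩ : ∃ n, m = n + 1 := ⟨m - 1, by omega⟩
      rw [show (n+1)+(n+1) = 2*n+2 from by ring, epsS_even n,
         show 2*n+2+1 = 2*(n+1)+1 from by ring, epsS_odd (n+1)]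
      have hch : ((2*(n+1)).choose (n+1) : ℝ) = 2 * ((2*n+1).choose n : ℝ) := by
        exact_mod_cast congrArg (fun x : ℕ => (x:ℝ)) (choose_succ_eq n)
      rw [hch]
      have h2 : (2:ℝ)^(2*(n+1)+1) = 2 * 2^(2*n+2) := by
        rw [show 2*(n+1)+1 = (2*n+2)+1 from by ring, pow_succ]; ring
      rw [h2]
      have hp : (0:ℝ) < (2:ℝ)^(2*n+2) := by positivity
      have : 2 * ((2*n+1).choose n : ℝ) / (2 * 2^(2*n+2))
          = ((2*n+1).choose n : ℝ) / 2^(2*n+2) := by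
        rw [mul_div_mul_left _ _ (two_ne_zero)]
      rw [this]
    · obtain ⟨m, rfl⟩ := ho
      rw [epsS_odd m, show 2*m+1+1 = 2*m+2 from by ring, epsS_even m]
      have key : ((m:ℝ)+1) * ((2*m+1).choose m : ℝ)
          = (2*(m:ℝ)+1) * ((2*m).choose m : ℝ) := by
        have h1 := Nat.succ_mul_centralBinom_succ m
        rw [Nat.centralBinom_eq_two_mul_choose, Nat.centralBinom_eq_two_mul_choose,
           choose_succ_eq m] at h1
        have h2 : (m+1) * ((2*m+1).choose m) = (2*m+1) * ((2*m).choose m) := by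
          have h3 : 2 * ((m+1) * ((2*m+1).choose m))
              = 2 * ((2*m+1) * ((2*m).choose m)) := by ring_nf; ring_nf at h1; omega
          omega
        exact_mod_cast congrArg (fun x : ℕ => (x:ℝ)) h2
      have hc : (0:ℝ) ≤ ((2*m).choose m : ℝ) := Nat.cast_nonneg _
      have hD : ((2*m+1).choose m : ℝ) ≤ 2 * ((2*m).choose m : ℝ) := by
        have hm1 : (0:ℝ) < (m:ℝ)+1 := by positivity
        have h3 : ((m:ℝ)+1) * ((2*m+1).choose m : ℝ)
            ≤ ((m:ℝ)+1) * (2 * ((2*m).choose m : ℝ)) := by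
          rw [key]; nlinarith
        exact le_of_mul_le_mul_left h3 hm1
      apply sub_le_sub_left
      rw [div_le_div_iff₀ (by positivity) (by positivity)]
      have h2 : (2:ℝ)^(2*m+2) = 2^(2*m+1) * 2 := by rw [pow_succ]
      rw [h2]
      have hp : (0:ℝ) < (2:ℝ)^(2*m+1) := by positivity
      nlinarith [hD, hp]
  · have hdiv : Tendsto (fun k : ℕ => k/2) atTop atTop := by
      apply tendsto_atTop_atTop.mpr
      intro b
      exact ⟨2*b, fun a ha => by omega⟩
    have hcomp := cb_tendsto.comp hdiv
    have hlim : Tendsto (fun k : ℕ => 1/2 - (Nat.centralBinom (k/2) : ℝ)/4^(k/2)/2)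
        atTop (nhds (1/2)) := by
      have := (tendsto_const_nhds (x := (1/2:ℝ)) (f := atTop)).sub (hcomp.div_const 2)
      simpa using this
    apply hlim.congr'
    filter_upwards [eventually_ge_atTop 1] with k hk
    exact (epsS_eq k hk).symm
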